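/- arXiv:2108.10554 — 3 statements merged into one kernel-verified Lean document; each statement's English description precedes it below -/
import Mathlib

section
/- Let r ≥ 2 be an integer and let n_1, ..., n_r be integers. Then there exist z_1, ..., z_r ∈ {0,1} such that for every i ∈ {1, ..., r}, Σ_{j ≠ i} z_j ≠ n_i. -/
open Finset

/-!
Take `z` to be the indicator of a set `S` with `#S = k`. Then `∑_{j ≠ i} z j` is `k - 1` on `S`
and `k` off `S`, so `z` works iff `S` contains every `i` with `n i = k` and no `i` with
`n i = k - 1`. Writing `a k = #{i | n i = k}`, such an `S` exists iff `a k ≤ k ≤ r - a (k - 1)`.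
Since `∑ a k ≤ r`, the least `k` with `a k ≤ k` satisfies this, unless `a (k - 1)` is so large
that `a k` and `a (k + 1)` are squeezed to almost nothing, in which case `k + 1` does.
-/

theorem exists_le_self_and_pred_add_le (a : ℕ → ℕ) {r : ℕ} (hr : 2 ≤ r)
    (hsum : ∀ m, ∑ k ∈ range m, a k ≤ r) :
    ∃ k, a k ≤ k ∧ ∀ j, j + 1 = k → a j + k ≤ r := by
  have hex : ∃ k, a k ≤ k :=
    ⟨r, (single_le_sum (fun _ _ => Nat.zero_le _) (self_mem_range_succ r)).trans (hsum _)⟩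
  have hmin : ∀ j < Nat.find hex, j < a j := fun j hj => not_le.1 (Nat.find_min hex hj)
  rcases hk : Nat.find hex with _ | j
  · exact ⟨0, hk ▸ Nat.find_spec hex, by omega⟩
  by_cases hj : a j + (j + 1) ≤ r
  · refine ⟨j + 1, hk ▸ Nat.find_spec hex, fun i hi => ?_⟩
    obtain rfl : i = j := by omega
    exact hj
  have hprefix := hsum (j + 3)
  simp only [sum_range_succ] at hprefix
  have haj : j < a j := hmin j (by omega)
  have hhead : j = 0 ∨ 1 ≤ ∑ i ∈ range j, a i := by
    rcases Nat.eq_zero_or_pos j with h | h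
    · exact .inl h
    · exact .inr ((hmin 0 (by omega)).trans_le
        (single_le_sum (fun _ _ => Nat.zero_le _) (mem_range.2 h)))
  refine ⟨j + 2, by omega, fun i hi => ?_⟩
  obtain rfl : i = j + 1 := by omega
  omega

theorem sum_range_card_filter_eq_natCast_le_card {ι : Type*} [Fintype ι] (n : ι → ℤ) (m : ℕ) :
    ∑ k ∈ range m, #{i | n i = k} ≤ Fintype.card ι := by
  calc ∑ k ∈ range m, #{i | n i = k}
      = ∑ k ∈ (range m).map Nat.castEmbedding, #{i | n i = k} := by rw [sum_map]; rfl
    _ = #{i | n i ∈ (range m).map Nat.castEmbedding} := sum_card_fiberwise_eq_card_filter _ _ _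
    _ ≤ Fintype.card ι := card_le_univ _

theorem sum_erase_ite_mem {ι : Type*} [Fintype ι] [DecidableEq ι] (S : Finset ι) (i : ι) :
    ∑ j ∈ univ.erase i, (if j ∈ S then (1 : ℤ) else 0) = #S - if i ∈ S then 1 else 0 := by
  rw [sum_erase_eq_sub (mem_univ i), sum_boole, filter_mem_eq_inter, univ_inter]

theorem exists_zero_one_avoiding_sums_of_card_le {ι : Type*} [Fintype ι] [DecidableEq ι]
    (n : ι → ℤ) (k : ℕ) (hA : #{i | n i = k} ≤ k) (hB : #{i | n i = k - 1} + k ≤ Fintype.card ι) :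
    ∃ z : ι → ℤ, (∀ i, z i = 0 ∨ z i = 1) ∧ ∀ i, ∑ j ∈ univ.erase i, z j ≠ n i := by
  have hsub : ({i | n i = k} : Finset ι) ⊆ ({i | n i ≠ k - 1} : Finset ι) :=
    monotone_filter_right _ fun i h => by omega
  have hcard : k ≤ #{i | n i ≠ k - 1} := by
    have := card_filter_add_card_filter_not (s := univ) (fun i => n i = k - 1)
    rw [card_univ] at this
    simp only [ne_eq]
    omega
  obtain ⟨S, hAS, hSB, rfl⟩ := exists_subsuperset_card_eq hsub hA hcard
  refine ⟨fun j => if j ∈ S then 1 else 0, fun i => by by_cases hi : i ∈ S <;> simp [hi],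
    fun i => ?_⟩
  rw [sum_erase_ite_mem]
  split_ifs with hi
  · simpa [eq_comm] using hSB hi
  · exact fun h => hi (hAS (by simp [← h]))

theorem exists_zero_one_avoiding_sums (r : ℕ) (hr : 2 ≤ r) (n : Fin r → ℤ) :
    ∃ z : Fin r → ℤ, (∀ i, z i = 0 ∨ z i = 1) ∧
      ∀ i : Fin r, (∑ j ∈ Finset.univ.erase i, z j) ≠ n i := by
  obtain ⟨k, hA, hpred⟩ := exists_le_self_and_pred_add_le (fun k : ℕ => #{i | n i = k}) hr
    fun m => by simpa using sum_range_card_filter_eq_natCast_le_card n m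
  refine exists_zero_one_avoiding_sums_of_card_le n k hA ?_
  rw [Fintype.card_fin]
  rcases k with _ | j
  · simpa using card_le_univ (filter (fun i => n i = -1) univ)
  · simpa using hpred j rfl
end

section
/- The monomial Z_1 Z_2 ··· Z_r has nonzero coefficient in the polynomial P(Z_1,...,Z_r) = Π_{i=1}^r (Σ_{j≠i} Z_j − n_i) over the rационals, for every r ≥ 2 and all integers n_1, ..., n_r; in fact this coefficient equals the permanent-like count of systems of distinct representatives, which is positive. -/
open Finset MvPolynomial

/-!
Expanding the product, every term that uses at least one constant `n i` has total degree
less than `r`, so the coefficient of `Z₁ ⋯ Z_r` is the same as in `∏ i, ∑ j ≠ i, Z j`. There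
it counts the maps `f` with `f i ≠ i` whose monomial `∏ i, Z (f i)` is `Z₁ ⋯ Z_r`, i.e. the
derangements of `Fin r`; for `r ≥ 2` the cyclic rotation is one.
-/

namespace MvPolynomial

variable {σ ι R : Type*} [CommSemiring R]

lemma totalDegree_prod_le_card {s : Finset ι} {p : ι → MvPolynomial σ R}
    (hp : ∀ i ∈ s, (p i).totalDegree ≤ 1) : (∏ i ∈ s, p i).totalDegree ≤ #s :=
  (totalDegree_finsetProd s p).trans <| by simpa using sum_le_card_nsmul s _ 1 hp

lemma coeff_prod_add_C_of_card_le_degree {s : Finset ι} {p : ι → MvPolynomial σ R} (c : ι → R)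
    (hp : ∀ i ∈ s, (p i).totalDegree ≤ 1) {m : σ →₀ ℕ} (hm : #s ≤ m.degree) :
    coeff m (∏ i ∈ s, (p i + C (c i))) = coeff m (∏ i ∈ s, p i) := by
  classical
  rw [prod_add, coeff_sum, sum_eq_single_of_mem s (mem_powerset_self s)]
  · simp
  · intro t hts hne
    have hlt : (∏ i ∈ t, p i).totalDegree < m.degree :=
      (totalDegree_prod_le_card fun i hi => hp i (mem_powerset.1 hts hi)).trans_lt <|
        (card_lt_card (ssubset_of_subset_of_ne (mem_powerset.1 hts) hne)).trans_le hm
    rw [← map_prod, mul_comm, coeff_C_mul, coeff_eq_zero_of_totalDegree_lt hlt, mul_zero]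

lemma coeff_prod_sum_X [Fintype ι] [DecidableEq ι] [DecidableEq σ] (t : ι → Finset σ)
    (m : σ →₀ ℕ) :
    coeff m (∏ i, ∑ j ∈ t i, X j : MvPolynomial σ R) =
      #{f ∈ Fintype.piFinset t | ∑ i, Finsupp.single (f i) 1 = m} := by
  simp_rw [prod_univ_sum, coeff_sum, X, ← monomial_sum_one, coeff_monomial, sum_boole]

end MvPolynomial

theorem coeff_of_product_monomial_pos (r : ℕ) (hr : 2 ≤ r) (n : Fin r → ℤ) :
    0 < MvPolynomial.coeff (∑ i : Fin r, Finsupp.single i 1)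
      (∏ i : Fin r,
        ((∑ j ∈ Finset.univ.erase i, (MvPolynomial.X j : MvPolynomial (Fin r) ℚ)) -
          MvPolynomial.C (n i : ℚ))) := by
  have hdeg : #(univ : Finset (Fin r)) ≤ (∑ i : Fin r, Finsupp.single i 1).degree := by simp
  simp_rw [sub_eq_add_neg, ← map_neg]
  rw [coeff_prod_add_C_of_card_le_degree _
    (fun i _ => totalDegree_finsetSum_le fun j _ => (totalDegree_X j).le) hdeg, coeff_prod_sum_X]
  have hrot : ∀ i, finRotate r i ≠ i := fun i =>
    Equiv.Perm.mem_support.1 (support_finRotate_of_le hr ▸ mem_univ i)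
  refine Nat.cast_pos.2 (card_pos.2 ⟨finRotate r, mem_filter.2 ⟨?_, ?_⟩⟩)
  · exact Fintype.mem_piFinset.2 fun i => mem_erase.2 ⟨hrot i, mem_univ _⟩
  · exact Equiv.sum_comp (finRotate r) fun j => Finsupp.single j 1
end

section
/- Let G be a nice graph with chromatic number at most 3. Then G admits a labelling ℓ : E(G) → {1,2,3} whose induced product colouring ρ_ℓ(v) = Π_{e ∋ v} ℓ(e) is a proper vertex colouring. -/
open SimpleGraph Finset
namespace SK3
set_option linter.unusedSectionVars false

variable {V : Type*} [Fintype V] [DecidableEq V]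

def lmap (G : SimpleGraph V) [DecidableRel G.Adj] :
    (Sym2 V → ZMod 3) →ₗ[ZMod 3] (V → ZMod 3) where
  toFun x := fun v => ∑ w ∈ G.neighborFinset v, x s(v, w)
  map_add' x y := by funext v; exact Finset.sum_add_distrib
  map_smul' c x := by funext v; simp [Finset.mul_sum]

def dvec (u : V) : V → ZMod 3 := Pi.single u 1

lemma dvec_apply (u z : V) : dvec (V := V) u z = if z = u then 1 else 0 := by
  rw [dvec, Pi.single_apply]

variable {G : SimpleGraph V} [DecidableRel G.Adj]

lemma edge_mem {u v : V} (h : G.Adj u v) :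
    dvec u + dvec v ∈ LinearMap.range (lmap G) := by
  refine ⟨fun e => if e = s(u, v) then 1 else 0, ?_⟩
  funext z
  show (∑ w ∈ G.neighborFinset z, if s(z, w) = s(u, v) then (1 : ZMod 3) else 0) = _
  have hne : u ≠ v := h.ne
  simp only [Pi.add_apply, dvec_apply]
  by_cases hzu : z = u
  · subst hzu
    rw [Finset.sum_eq_single v]
    · simp [hne, Ne.symm hne]
    · intro w _ hwv
      simp only [Sym2.congr_right]
      exact if_neg hwv
    · intro hv
      exact absurd ((mem_neighborFinset G z v).mpr h) hv
  · by_cases hzv : z = v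
    · subst hzv
      rw [Finset.sum_eq_single u]
      · rw [if_pos (Sym2.eq_swap), if_neg hzu, if_pos rfl, zero_add]
      · intro w _ hwu
        rw [if_neg]
        rw [Sym2.eq_iff]
        rintro (⟨h1, _⟩ | ⟨_, h2⟩)
        · exact hne h1.symm
        · exact hwu h2
      · intro hu
        exact absurd ((mem_neighborFinset G z u).mpr h.symm) hu
    · rw [Finset.sum_eq_zero, if_neg hzu, if_neg hzv, add_zero]
      intro w _
      rw [if_neg]
      rw [Sym2.eq_iff]
      rintro (⟨h1, _⟩ | ⟨h1, _⟩)
      · exact hzu h1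
      · exact hzv h1

lemma walk_mem {u v : V} (p : G.Walk u v) :
    dvec u + ((-1 : ZMod 3) ^ (p.length + 1)) • dvec v ∈ LinearMap.range (lmap G) := by
  induction p with
  | nil => simp [pow_succ, dvec]
  | @cons a b c hab q ih =>
      have key : dvec a + ((-1 : ZMod 3) ^ ((Walk.cons hab q).length + 1)) • dvec c
          = (dvec a + dvec b) - (dvec b + ((-1 : ZMod 3) ^ (q.length + 1)) • dvec c) := by
        simp only [Walk.length_cons]
        funext z
        simp only [Pi.add_apply, Pi.sub_apply, Pi.smul_apply, smul_eq_mul]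
        rw [pow_succ, pow_succ]
        ring
      rw [key]
      exact sub_mem (edge_mem hab) ih

lemma walk_mem_even {u v : V} (p : G.Walk u v) (hp : Even p.length) :
    dvec u - dvec v ∈ LinearMap.range (lmap G) := by
  have h1 : ((-1 : ZMod 3) ^ (p.length + 1)) = -1 := Odd.neg_one_pow (Even.add_one hp)
  have := walk_mem p
  rw [h1] at this
  rwa [neg_one_smul, ← sub_eq_add_neg] at this

lemma walk_mem_odd {u v : V} (p : G.Walk u v) (hp : Odd p.length) :
    dvec u + dvec v ∈ LinearMap.range (lmap G) := by
  have h1 : ((-1 : ZMod 3) ^ (p.length + 1)) = 1 := Even.neg_one_pow (Odd.add_one hp)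
  have := walk_mem p
  rw [h1, one_smul] at this
  exact this

lemma dvec_mem_of_odd_closed {r : V} (p : G.Walk r r) (hp : Odd p.length) :
    dvec (V := V) r ∈ LinearMap.range (lmap G) := by
  have h2 : dvec r + dvec r ∈ LinearMap.range (lmap G) := walk_mem_odd p hp
  have h3 : (2 : ZMod 3) • (dvec r + dvec r) = dvec r := by
    funext z
    simp only [Pi.smul_apply, Pi.add_apply, smul_eq_mul]
    have : ∀ a : ZMod 3, 2 * (a + a) = a := by decide
    exact this _
  exact h3 ▸ Submodule.smul_mem _ _ h2

lemma dvec_mem_of_reachable {r z : V} (hr : dvec (V := V) r ∈ LinearMap.range (lmap G))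
    (h : G.Reachable r z) : dvec (V := V) z ∈ LinearMap.range (lmap G) := by
  obtain ⟨p⟩ := h
  rcases Nat.even_or_odd p.length with he | ho
  · have := walk_mem_even p he
    have : dvec z = dvec r - (dvec r - dvec z) := by abel
    rw [this]
    exact sub_mem hr (walk_mem_even p he)
  · have : dvec z = (dvec r + dvec z) - dvec r := by abel
    rw [this]
    exact sub_mem (walk_mem_odd p ho) hr
lemma sum_dvec_apply (F : Finset V) (f : V → ZMod 3) (y : V) :
    (∑ z ∈ F, f z • dvec z) y = if y ∈ F then f y else 0 := by
  rw [Finset.sum_apply]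
  simp only [Pi.smul_apply, dvec_apply, smul_eq_mul, mul_ite, mul_one, mul_zero]
  exact Finset.sum_ite_eq F y f

variable {G : SimpleGraph V} [DecidableRel G.Adj]

lemma balanced_mem {A B : Finset V} {a0 : V} (hdisj : ∀ z, z ∈ A → z ∈ B → False)
    (hmA : ∀ u ∈ A, dvec u - dvec a0 ∈ LinearMap.range (lmap G))
    (hmB : ∀ u ∈ B, dvec u + dvec a0 ∈ LinearMap.range (lmap G))
    (φ : V → ZMod 3) (hsupp : ∀ z, φ z ≠ 0 → z ∈ A ∨ z ∈ B)
    (hbal : ∑ z ∈ A, φ z = ∑ z ∈ B, φ z) : φ ∈ LinearMap.range (lmap G) := by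
  have key : φ = (∑ u ∈ A, φ u • (dvec u - dvec a0)) + ∑ u ∈ B, φ u • (dvec u + dvec a0) := by
    have h1 : ∑ u ∈ A, φ u • (dvec u - dvec a0)
        = (∑ u ∈ A, φ u • dvec u) - (∑ u ∈ A, φ u) • dvec a0 := by
      simp only [smul_sub, Finset.sum_sub_distrib, Finset.sum_smul]
    have h2 : ∑ u ∈ B, φ u • (dvec u + dvec a0)
        = (∑ u ∈ B, φ u • dvec u) + (∑ u ∈ B, φ u) • dvec a0 := by
      simp only [smul_add, Finset.sum_add_distrib, Finset.sum_smul]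
    rw [h1, h2, hbal]
    have h3 : ∀ X Y t : V → ZMod 3, (X - t) + (Y + t) = X + Y := by intros; abel
    rw [h3]
    funext z
    rw [Pi.add_apply, sum_dvec_apply, sum_dvec_apply]
    by_cases hA : z ∈ A
    · rw [if_pos hA, if_neg (fun hB => hdisj z hA hB), add_zero]
    · by_cases hB : z ∈ B
      · rw [if_pos hB, if_neg hA, zero_add]
      · rw [if_neg hA, if_neg hB, add_zero]
        by_contra h
        rcases hsupp z h with h' | h'
        · exact hA h'
        · exact hB h'
  rw [key]
  exact add_mem
    (Submodule.sum_mem _ fun u hu => Submodule.smul_mem _ _ (hmA u hu))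
    (Submodule.sum_mem _ fun u hu => Submodule.smul_mem _ _ (hmB u hu))

lemma component_phi
    (hnice : ∀ u v : V, G.Adj u v → ∃ w, w ≠ u ∧ w ≠ v ∧ (G.Adj u w ∨ G.Adj v w))
    (c : V → ZMod 3) (hc : ∀ u v, G.Adj u v → c u ≠ c v) (a0 : V) :
    ∃ φ : V → ZMod 3, φ ∈ LinearMap.range (lmap G) ∧
      (∀ z, ¬ G.Reachable a0 z → φ z = 0) ∧
      (∀ u v, G.Adj u v → G.Reachable a0 u → φ u ≠ φ v) := by
  classical
  by_cases hodd : ∃ p : G.Walk a0 a0, Odd p.length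
  · -- non-bipartite component: all dvec z available
    obtain ⟨p, hp⟩ := hodd
    have hr : dvec (V := V) a0 ∈ LinearMap.range (lmap G) := dvec_mem_of_odd_closed p hp
    set K : Finset V := univ.filter (fun z => G.Reachable a0 z) with hK
    have hKmem : ∀ z, z ∈ K ↔ G.Reachable a0 z := by
      intro z; simp [hK]
    refine ⟨∑ z ∈ K, c z • dvec z, ?_, ?_, ?_⟩
    · exact Submodule.sum_mem _ fun z hz =>
        Submodule.smul_mem _ _ (dvec_mem_of_reachable hr ((hKmem z).mp hz))
    · intro z hz
      rw [sum_dvec_apply, if_neg (fun h => hz ((hKmem z).mp h))]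
    · intro u v huv hru
      have hrv : G.Reachable a0 v := hru.trans huv.reachable
      rw [sum_dvec_apply, sum_dvec_apply, if_pos ((hKmem u).mpr hru), if_pos ((hKmem v).mpr hrv)]
      exact hc u v huv
  · push_neg at hodd
    set Sev : Finset V := univ.filter (fun z => ∃ p : G.Walk a0 z, Even p.length) with hSev
    set Sod : Finset V := univ.filter (fun z => ∃ p : G.Walk a0 z, Odd p.length) with hSod
    have hSevMem : ∀ z, z ∈ Sev ↔ ∃ p : G.Walk a0 z, Even p.length := by intro z; simp [hSev]
    have hSodMem : ∀ z, z ∈ Sod ↔ ∃ p : G.Walk a0 z, Odd p.length := by intro z; simp [hSod]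
    have hdisj : ∀ z, z ∈ Sev → z ∈ Sod → False := by
      intro z h1 h2
      obtain ⟨p, hp⟩ := (hSevMem z).mp h1
      obtain ⟨q, hq⟩ := (hSodMem z).mp h2
      refine hodd (p.append q.reverse) ?_
      rw [Walk.length_append, Walk.length_reverse]
      exact hp.add_odd hq
    have ha0 : a0 ∈ Sev := (hSevMem a0).mpr ⟨Walk.nil, by simp⟩
    have hcover : ∀ z, G.Reachable a0 z → z ∈ Sev ∨ z ∈ Sod := by
      intro z hz
      obtain ⟨p⟩ := hz
      rcases Nat.even_or_odd p.length with h | h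
      · exact Or.inl ((hSevMem z).mpr ⟨p, h⟩)
      · exact Or.inr ((hSodMem z).mpr ⟨p, h⟩)
    have hreach : ∀ z, z ∈ Sev ∨ z ∈ Sod → G.Reachable a0 z := by
      intro z hz
      rcases hz with h | h
      · obtain ⟨p, _⟩ := (hSevMem z).mp h; exact ⟨p⟩
      · obtain ⟨p, _⟩ := (hSodMem z).mp h; exact ⟨p⟩
    have hcrossEv : ∀ u v, u ∈ Sev → G.Adj u v → v ∈ Sod := by
      intro u v hu huv
      obtain ⟨p, hp⟩ := (hSevMem u).mp hu
      exact (hSodMem v).mpr ⟨p.concat huv, by rw [Walk.length_concat]; exact hp.add_one⟩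
    have hcrossOd : ∀ u v, u ∈ Sod → G.Adj u v → v ∈ Sev := by
      intro u v hu huv
      obtain ⟨p, hp⟩ := (hSodMem u).mp hu
      exact (hSevMem v).mpr ⟨p.concat huv, by rw [Walk.length_concat]; exact hp.add_one⟩
    have hmA : ∀ u ∈ Sev, dvec u - dvec a0 ∈ LinearMap.range (lmap G) := by
      intro u hu
      obtain ⟨p, hp⟩ := (hSevMem u).mp hu
      rw [show dvec u - dvec a0 = -(dvec (V := V) a0 - dvec u) by abel]
      exact neg_mem (walk_mem_even p hp)
    have hmB : ∀ u ∈ Sod, dvec u + dvec a0 ∈ LinearMap.range (lmap G) := by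
      intro u hu
      obtain ⟨p, hp⟩ := (hSodMem u).mp hu
      rw [add_comm]
      exact walk_mem_odd p hp
    by_cases hSodE : Sod = ∅
    · refine ⟨0, zero_mem _, fun z _ => rfl, ?_⟩
      intro u v huv hru
      rcases hcover u hru with hu | hu
      · exact absurd (hcrossEv u v hu huv) (by simp [hSodE])
      · exact absurd hu (by simp [hSodE])
    · obtain ⟨b0, hb0⟩ := Finset.nonempty_iff_ne_empty.mpr hSodE
      have build : ∀ (X Y : Finset V) (k : ℕ),
          ((X = Sev ∧ Y = Sod) ∨ (X = Sod ∧ Y = Sev)) → k ≤ X.card →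
          ((2 * k : ℕ) : ZMod 3) = (Y.card : ZMod 3) →
          ∃ φ : V → ZMod 3, φ ∈ LinearMap.range (lmap G) ∧
            (∀ z, ¬ G.Reachable a0 z → φ z = 0) ∧
            (∀ u v, G.Adj u v → G.Reachable a0 u → φ u ≠ φ v) := by
        intro X Y k hor hkX hbal
        have hdisjXY : ∀ z, z ∈ X → z ∈ Y → False := by
          rcases hor with ⟨hx, hy⟩ | ⟨hx, hy⟩ <;> subst hx <;> subst hy
          · exact hdisj
          · exact fun z h1 h2 => hdisj z h2 h1
        have hreachXY : ∀ z, z ∈ X ∨ z ∈ Y → G.Reachable a0 z := by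
          rcases hor with ⟨hx, hy⟩ | ⟨hx, hy⟩ <;> subst hx <;> subst hy
          · exact hreach
          · exact fun z hz => hreach z hz.symm
        obtain ⟨P, hPX, hPcard⟩ := Finset.exists_subset_card_eq hkX
        set φ : V → ZMod 3 :=
          fun z => if z ∈ P then 2 else if z ∈ X then 0 else if z ∈ Y then 1 else 0 with hφ
        have hφX : ∀ z ∈ X, φ z = if z ∈ P then 2 else 0 := by
          intro z hz; by_cases hzP : z ∈ P <;> simp [hφ, hzP, hz]
        have hφY : ∀ z ∈ Y, φ z = 1 := by
          intro z hz
          have h1 : z ∉ P := fun h => hdisjXY z (hPX h) hz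
          have h2 : z ∉ X := fun h => hdisjXY z h hz
          simp [hφ, h1, h2, hz]
        have hsumX : ∑ z ∈ X, φ z = ((2 * k : ℕ) : ZMod 3) := by
          rw [Finset.sum_congr rfl hφX, Finset.sum_ite_mem,
            Finset.inter_eq_right.mpr hPX, Finset.sum_const, hPcard]
          push_cast
          ring
        have hsumY : ∑ z ∈ Y, φ z = (Y.card : ZMod 3) := by
          rw [Finset.sum_congr rfl hφY, Finset.sum_const]
          simp
        have hsupp : ∀ z, φ z ≠ 0 → z ∈ Sev ∨ z ∈ Sod := by
          intro z hz
          have hz' : z ∈ X ∨ z ∈ Y := by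
            by_contra h
            push_neg at h
            have h1 : z ∉ P := fun hp => h.1 (hPX hp)
            simp [hφ, h1, h.1, h.2] at hz
          rcases hor with ⟨hx, hy⟩ | ⟨hx, hy⟩ <;> subst hx <;> subst hy
          · exact hz'
          · exact hz'.symm
        refine ⟨φ, ?_, ?_, ?_⟩
        · apply balanced_mem hdisj hmA hmB φ hsupp
          rcases hor with ⟨hx, hy⟩ | ⟨hx, hy⟩ <;> subst hx <;> subst hy
          · rw [hsumX, hsumY, hbal]
          · rw [hsumX, hsumY, hbal]
        · intro z hz
          have h2 : z ∉ X := fun h => hz (hreachXY z (Or.inl h))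
          have h3 : z ∉ Y := fun h => hz (hreachXY z (Or.inr h))
          have h1 : z ∉ P := fun h => h2 (hPX h)
          simp [hφ, h1, h2, h3]
        · intro u v huv hru
          have hor2 : (u ∈ X ∧ v ∈ Y) ∨ (u ∈ Y ∧ v ∈ X) := by
            rcases hor with ⟨hx, hy⟩ | ⟨hx, hy⟩ <;> subst hx <;> subst hy <;>
                rcases hcover u hru with hu | hu
            · exact Or.inl ⟨hu, hcrossEv u v hu huv⟩
            · exact Or.inr ⟨hu, hcrossOd u v hu huv⟩
            · exact Or.inr ⟨hu, hcrossEv u v hu huv⟩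
            · exact Or.inl ⟨hu, hcrossOd u v hu huv⟩
          rcases hor2 with ⟨hu, hv⟩ | ⟨hu, hv⟩
          · rw [hφY v hv, hφX u hu]
            by_cases h : u ∈ P <;> simp [h] <;> decide
          · rw [hφY u hu, hφX v hv]
            by_cases h : v ∈ P <;> simp [h] <;> decide
      by_cases hS2 : 2 ≤ Sev.card
      · refine build Sev Sod ((2 * Sod.card) % 3) (Or.inl ⟨rfl, rfl⟩) ?_ ?_
        · have := Nat.mod_lt (2 * Sod.card) (show 0 < 3 by norm_num)
          omega
        · push_cast [ZMod.natCast_mod]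
          have : ∀ d : ZMod 3, 2 * (2 * d) = d := by decide
          exact this _
      · have hS1 : Sev = {a0} := by
          have h1 : Sev.card ≤ 1 := by omega
          have h2 := Finset.card_le_one.mp h1
          exact Finset.eq_singleton_iff_unique_mem.mpr ⟨ha0, fun x hx => h2 x hx a0 ha0⟩
        have hb0ne : b0 ≠ a0 := fun h => hdisj a0 ha0 (h ▸ hb0)
        obtain ⟨q, hq⟩ := (hSodMem b0).mp hb0
        obtain ⟨w, hw, p', hp'⟩ := Walk.exists_eq_cons_of_ne hb0ne q.reverse
        have hwreach : G.Reachable a0 w := ⟨p'.reverse⟩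
        have hwSev : w ∈ Sev := by
          rcases hcover w hwreach with h | h
          · exact h
          · exact absurd (hcrossOd w b0 h hw.symm) (fun hc' => hdisj b0 hc' hb0)
        have hwa0 : w = a0 := by rw [hS1] at hwSev; exact Finset.mem_singleton.mp hwSev
        have hadj0 : G.Adj a0 b0 := (hwa0 ▸ hw).symm
        obtain ⟨w', hw'a, hw'b, hcase⟩ := hnice a0 b0 hadj0
        have hw'Sod : w' ∈ Sod := by
          rcases hcase with h | h
          · exact hcrossEv a0 w' ha0 h
          · exfalso
            have h3 := hcrossOd b0 w' hb0 h
            rw [hS1] at h3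
            exact hw'a (Finset.mem_singleton.mp h3)
        have h2le : 2 ≤ Sod.card :=
          Finset.one_lt_card.mpr ⟨b0, hb0, w', hw'Sod, fun h => hw'b h.symm⟩
        refine build Sod Sev 2 (Or.inr ⟨rfl, rfl⟩) h2le ?_
        rw [hS1]
        simp
        decide
lemma natkey : ∀ m : ℕ, m < 3 →
    ((((m + 1 : ℕ).factorization 2 : ℕ) : ZMod 3) + 2 * (((m + 1 : ℕ).factorization 3 : ℕ) : ZMod 3))
      = (m : ZMod 3) := by
  intro m hm
  interval_cases m <;>
    simp [Nat.Prime.factorization Nat.prime_two, Nat.Prime.factorization Nat.prime_three,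
      Finsupp.single_apply] <;> decide

lemma global_phi
    (hnice : ∀ u v : V, G.Adj u v → ∃ w, w ≠ u ∧ w ≠ v ∧ (G.Adj u w ∨ G.Adj v w))
    (c : V → ZMod 3) (hc : ∀ u v, G.Adj u v → c u ≠ c v) :
    ∀ (n : ℕ) (U : Finset V), U.card ≤ n →
      (∀ u ∈ U, ∀ v, G.Reachable u v → v ∈ U) →
      ∃ φ : V → ZMod 3, φ ∈ LinearMap.range (lmap G) ∧
        (∀ z, z ∉ U → φ z = 0) ∧
        (∀ u v, G.Adj u v → u ∈ U → φ u ≠ φ v) := by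
  intro n
  induction n with
  | zero =>
      intro U hU _
      have hE : U = ∅ := Finset.card_eq_zero.mp (Nat.le_zero.mp hU)
      subst hE
      exact ⟨0, zero_mem _, fun _ _ => rfl, fun u v _ hu => absurd hu (Finset.notMem_empty u)⟩
  | succ n ih =>
      intro U hU hcl
      rcases Finset.eq_empty_or_nonempty U with hE | ⟨a0, ha0⟩
      · subst hE
        exact ⟨0, zero_mem _, fun _ _ => rfl, fun u v _ hu => absurd hu (Finset.notMem_empty u)⟩
      · classical
        set K : Finset V := univ.filter (fun z => G.Reachable a0 z) with hK
        have hKmem : ∀ z, z ∈ K ↔ G.Reachable a0 z := by intro z; simp [hK]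
        have hKU : K ⊆ U := fun z hz => hcl a0 ha0 z ((hKmem z).mp hz)
        obtain ⟨φ1, hm1, hs1, hp1⟩ := component_phi hnice c hc a0
        have ha0K : a0 ∈ K := (hKmem a0).mpr (SimpleGraph.Reachable.refl a0)
        have hcard : (U \ K).card ≤ n := by
          have h1 : (U \ K).card < U.card :=
            Finset.card_lt_card (Finset.sdiff_ssubset hKU ⟨a0, ha0K⟩)
          omega
        have hclosed : ∀ u ∈ U \ K, ∀ v, G.Reachable u v → v ∈ U \ K := by
          intro u hu v huv
          rw [Finset.mem_sdiff] at hu ⊢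
          refine ⟨hcl u hu.1 v huv, fun hvK => hu.2 ?_⟩
          exact (hKmem u).mpr (((hKmem v).mp hvK).trans huv.symm)
        obtain ⟨φ2, hm2, hs2, hp2⟩ := ih (U \ K) hcard hclosed
        refine ⟨φ1 + φ2, add_mem hm1 hm2, ?_, ?_⟩
        · intro z hz
          rw [Pi.add_apply, hs1 z (fun h => hz (hKU ((hKmem z).mpr h))),
            hs2 z (fun h => hz (Finset.mem_sdiff.mp h).1), add_zero]
        · intro u v huv hu
          by_cases huK : u ∈ K
          · have hru : G.Reachable a0 u := (hKmem u).mp huK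
            have hvK : v ∈ K := (hKmem v).mpr (hru.trans huv.reachable)
            have h2u : φ2 u = 0 := hs2 u (fun h => (Finset.mem_sdiff.mp h).2 huK)
            have h2v : φ2 v = 0 := hs2 v (fun h => (Finset.mem_sdiff.mp h).2 hvK)
            simpa [h2u, h2v] using hp1 u v huv hru
          · have huUK : u ∈ U \ K := Finset.mem_sdiff.mpr ⟨hu, huK⟩
            have h1u : φ1 u = 0 := hs1 u (fun h => huK ((hKmem u).mpr h))
            have h1v : φ1 v = 0 := hs1 v (fun h =>
              huK ((hKmem u).mpr (h.trans huv.symm.reachable)))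
            simpa [h1u, h1v] using hp2 u v huv huUK

end SK3

open SK3 in

theorem multiplicative_123_for_three_colorable {V : Type*} [Fintype V] [DecidableEq V]
    (G : SimpleGraph V) [DecidableRel G.Adj]
    (hnice : ∀ u v : V, G.Adj u v → ∃ w, w ≠ u ∧ w ≠ v ∧ (G.Adj u w ∨ G.Adj v w))
    (hcol : G.Colorable 3) :
    ∃ ℓ : Sym2 V → ℕ,
      (∀ e ∈ G.edgeSet, ℓ e ∈ ({1, 2, 3} : Set ℕ)) ∧
      ∀ u v : V, G.Adj u v →
        (∏ w ∈ G.neighborFinset u, ℓ s(u, w)) ≠ ∏ w ∈ G.neighborFinset v, ℓ s(v, w) := by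
  obtain ⟨C⟩ := hcol
  set c : V → ZMod 3 := fun v => ((C v).val : ZMod 3) with hcdef
  have hc : ∀ u v, G.Adj u v → c u ≠ c v := by
    intro u v huv h
    apply C.valid huv
    have h1 := congrArg ZMod.val h
    rw [hcdef] at h1
    simp only [ZMod.val_cast_of_lt (C u).isLt, ZMod.val_cast_of_lt (C v).isLt] at h1
    exact Fin.ext h1
  obtain ⟨φ, hm, _, hp⟩ := global_phi hnice c hc (univ : Finset V).card univ le_rfl
    (fun u _ v _ => Finset.mem_univ v)
  obtain ⟨x, hx⟩ := hm
  refine ⟨fun e => (x e).val + 1, ?_, ?_⟩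
  · intro e _
    have := ZMod.val_lt (x e)
    simp only [Set.mem_insert_iff, Set.mem_singleton_iff]
    omega
  · intro u v huv heq
    set ℓ : Sym2 V → ℕ := fun e => (x e).val + 1 with hldef
    have hprod : ∀ y : V,
        (∏ w ∈ G.neighborFinset y, ℓ s(y, w)).factorization
          = ∑ w ∈ G.neighborFinset y, (ℓ s(y, w)).factorization :=
      fun y => Nat.factorization_prod (fun w _ => Nat.succ_ne_zero _)
    have hf := congrArg Nat.factorization heq
    rw [hprod u, hprod v] at hf
    have h2 := DFunLike.congr_fun hf 2
    have h3 := DFunLike.congr_fun hf 3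
    rw [Finset.sum_apply', Finset.sum_apply'] at h2 h3
    have hphi : ∀ y : V, φ y
        = ((∑ w ∈ G.neighborFinset y, (ℓ s(y, w)).factorization 2 : ℕ) : ZMod 3)
          + 2 * ((∑ w ∈ G.neighborFinset y, (ℓ s(y, w)).factorization 3 : ℕ) : ZMod 3) := by
      intro y
      rw [← hx]
      show (∑ w ∈ G.neighborFinset y, x s(y, w)) = _
      push_cast
      rw [Finset.mul_sum, ← Finset.sum_add_distrib]
      refine Finset.sum_congr rfl fun w _ => ?_
      have hkey := natkey (x s(y, w)).val (ZMod.val_lt _)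
      rw [show ℓ s(y, w) = (x s(y, w)).val + 1 from rfl, hkey]
      exact (ZMod.natCast_rightInverse _).symm
    have : φ u = φ v := by rw [hphi u, hphi v, h2, h3]
    exact hp u v huv (Finset.mem_univ u) this
end
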